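/- Let Z ~ P0 be a real-valued random variable with finite moment generating function, mean 0, and variance σ² > 0. For μ ∈ ℝ, consider the parameter θ_μ(P) = E_P[Z] + μ and its s-value s(θ_μ, P0) = sup{ exp(−D_KL(P‖P0)) : E_P[Z] + μ = 0 }. Then, as μ → 0, s(θ_μ, P0) = e^{−μ²/(2σ²)} + o(μ²); that is, the function μ ↦ s(θ_μ,P0) − e^{−μ²/(2σ²)} is o(μ²) as μ → 0. -/

import Mathlib

/-!
Write `K` for the cumulant generating function of `Z` under `P₀`. For every `λ` and every `P`
with `E_P[Z] = -m`, Gibbs' variational inequality (nonnegativity of `D_KL(P‖P₀^λ)` for the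
exponentially tilted measure `P₀^λ`) gives `D_KL(P‖P₀) ≥ -λ m - K(λ)`, with equality for
`P = P₀^λ` when `K'(λ) = -m`. Hence `s(θ_m, P₀) ≤ exp (K(λ) + λ m)` for all `λ`, with equality
at a root `λ_m` of `K'(λ) + m = 0`; since `K'(λ) = σ² λ + o(λ)`, the intermediate value theorem
provides such a root with `λ_m = O(m)`. As `K(λ) = σ² λ² / 2 + o(λ²)`, taking `λ = -m / σ²` in
the upper bound and completing the square in the lower bound pins the exponent down to
`-m² / (2σ²) + o(m²)`.
-/

open MeasureTheory ProbabilityTheory Real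
open scoped ENNReal NNReal Classical

/-- Kullback–Leibler divergence `D_KL(P‖P₀)`, valued in `ℝ≥0∞`: it is the integral
`∫ log (dP/dP₀) dP` when `P ≪ P₀` (and the integrand is integrable), and `+∞` otherwise. -/
noncomputable def KLdiv {α : Type*} [MeasurableSpace α] (P P₀ : Measure α) : ℝ≥0∞ :=
  if P ≪ P₀ ∧ Integrable (llr P P₀) P then ENNReal.ofReal (∫ x, llr P P₀ x ∂P) else ⊤

/-- `exp(−D_KL(P‖P₀))`, with the convention `exp(−∞) = 0`. -/
noncomputable def expNegKL {α : Type*} [MeasurableSpace α] (P P₀ : Measure α) : ℝ :=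
  if KLdiv P P₀ = ⊤ then 0 else Real.exp (-(KLdiv P P₀).toReal)

open Filter Asymptotics

open Set Topology InformationTheory

section Asymptotics

variable {α : Type*} {l : Filter α}

theorem isLittleO_of_le_of_le {E : Type*} [Norm E] {f lo hi : α → ℝ} {g : α → E}
    (hlo : lo =o[l] g) (hhi : hi =o[l] g) (h_lo : ∀ᶠ x in l, lo x ≤ f x)
    (h_hi : ∀ᶠ x in l, f x ≤ hi x) : f =o[l] g := by
  refine IsBigO.trans_isLittleO ?_ (hlo.norm_left.add hhi.norm_left)
  refine IsBigO.of_bound 1 ?_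
  filter_upwards [h_lo, h_hi] with x h₁ h₂
  simp only [one_mul, norm_eq_abs]
  rw [abs_of_nonneg (a := |lo x| + |hi x|) (by positivity), abs_le]
  constructor <;> linarith [neg_abs_le (lo x), le_abs_self (hi x), abs_nonneg (lo x),
    abs_nonneg (hi x)]

theorem exp_add_sub_exp_isLittleO {g r φ : α → ℝ} (hg : ∀ᶠ x in l, g x ≤ 0) (hr : r =o[l] φ)
    (hφ : Tendsto φ l (𝓝 0)) : (fun x => exp (g x + r x) - exp (g x)) =o[l] φ := by
  have h_exp_g : (fun x => exp (g x)) =O[l] fun _ => (1 : ℝ) := by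
    refine IsBigO.of_bound 1 ?_
    filter_upwards [hg] with x hx
    simpa [abs_of_pos (exp_pos _)] using hx
  have h_exp_r : (fun x => exp (r x) - 1) =O[l] r := by
    have h := (exp_sub_sum_range_isBigO_pow 1).comp_tendsto (hr.tendsto_zero_of_tendsto hφ)
    simpa [Function.comp_def] using h
  refine ((h_exp_g.mul_isLittleO (h_exp_r.trans_isLittleO hr)).congr_left fun x => ?_).congr_right
    (fun x => one_mul _)
  rw [exp_add]; ring

theorem exists_isBigO_eventually_apply_add_eq_zero {F : ℝ → ℝ} {a : ℝ} (ha : a ≠ 0)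
    (hF : Continuous F) (hF0 : F 0 = 0) (hlin : (fun t => F t - a * t) =o[𝓝 0] fun t => t) :
    ∃ l : ℝ → ℝ, l =O[𝓝 0] (fun m => m) ∧ ∀ᶠ m in 𝓝 0, F (l m) + m = 0 := by
  -- `F (-2 / a * m)` is close to `-2 * m`, so the root lies between `0` and `-2 / a * m`.
  have hb : Tendsto (fun m => -2 / a * m) (𝓝 0) (𝓝 0) := by
    simpa using (continuous_const_mul (-2 / a)).tendsto 0
  have h_root : ∀ᶠ m in 𝓝 (0 : ℝ), ∃ t ∈ uIcc 0 (-2 / a * m), F t = -m := by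
    filter_upwards [hb.eventually (isLittleO_iff.1 hlin (half_pos (abs_pos.2 ha)))] with m hm
    refine intermediate_value_uIcc hF.continuousOn ?_
    have h_lin : a * (-2 / a * m) = -(2 * m) := by field_simp
    have h_err : |a| / 2 * |-2 / a * m| = |m| := by
      rw [abs_mul, abs_div, abs_neg, abs_two]; field_simp
    rw [norm_eq_abs, norm_eq_abs, h_lin, h_err, sub_neg_eq_add, abs_le] at hm
    rw [hF0, mem_uIcc]
    rcases le_total 0 m with h | h
    · right; constructor <;> linarith [abs_of_nonneg h]
    · left; constructor <;> linarith [abs_of_nonpos h]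
  have : ∀ m : ℝ, ∃ t ∈ uIcc 0 (-2 / a * m),
      (∃ t ∈ uIcc 0 (-2 / a * m), F t = -m) → F t = -m := by
    intro m
    by_cases h : ∃ t ∈ uIcc 0 (-2 / a * m), F t = -m
    · obtain ⟨t, ht, hFt⟩ := h
      exact ⟨t, ht, fun _ => hFt⟩
    · exact ⟨0, left_mem_uIcc, fun h' => absurd h' h⟩
  choose l hl_mem hl_root using this
  refine ⟨l, IsBigO.of_bound (2 / |a|) (Eventually.of_forall fun m => ?_), ?_⟩
  · have := abs_sub_le_of_uIcc_subset_uIcc (uIcc_subset_uIcc_left (hl_mem m))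
    rw [sub_zero, sub_zero, abs_mul, abs_div, abs_neg, abs_two] at this
    simpa using this
  · filter_upwards [h_root] with m hm
    rw [hl_root m hm]; ring

theorem sub_exp_neg_sq_div_isLittleO_sq {K s l : ℝ → ℝ} {a : ℝ} (ha : 0 < a)
    (hK : (fun t => K t - a / 2 * t ^ 2) =o[𝓝 0] fun t => t ^ 2)
    (h_le : ∀ t m, s m ≤ exp (K t + t * m))
    (hl : l =O[𝓝 0] fun m => m) (h_ge : ∀ᶠ m in 𝓝 0, exp (K (l m) + l m * m) ≤ s m) :
    (fun m => s m - exp (-(m ^ 2) / (2 * a))) =o[𝓝 0] fun m => m ^ 2 := by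
  have h_rem : ∀ t : ℝ → ℝ, t =O[𝓝 0] (fun m => m) →
      (fun m => exp (-(m ^ 2) / (2 * a) + (K (t m) - a / 2 * t m ^ 2))
        - exp (-(m ^ 2) / (2 * a))) =o[𝓝 0] fun m => m ^ 2 := fun t ht =>
    exp_add_sub_exp_isLittleO (Eventually.of_forall fun m => by
        rw [neg_div]; exact neg_nonpos.2 (by positivity))
      ((hK.comp_tendsto (ht.trans_tendsto tendsto_id)).trans_isBigO (ht.pow 2))
      (by simpa using (continuous_pow 2).tendsto (0 : ℝ))
  refine isLittleO_of_le_of_le (h_rem l hl) (h_rem (fun m => -m / a) ?_) ?_ ?_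
  · exact (isBigO_const_mul_self (-1 / a) _ _).congr_left fun m => by ring
  · filter_upwards [h_ge] with m hm
    refine sub_le_sub_right ((exp_le_exp.2 ?_).trans hm) _
    have h_sq : 0 ≤ (a * l m + m) ^ 2 / (2 * a) := by positivity
    have h_expand :
        (a * l m + m) ^ 2 / (2 * a) = a / 2 * l m ^ 2 + l m * m + m ^ 2 / (2 * a) := by
      field_simp; ring
    rw [neg_div]
    linarith
  · refine Eventually.of_forall fun m => sub_le_sub_right ((h_le (-m / a) m).trans_eq ?_) _
    congr 1
    field_simp
    ring

end Asymptotics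

section Cgf

variable {Ω : Type*} [MeasurableSpace Ω] {μ : Measure Ω} {X : Ω → ℝ}

theorem mem_interior_integrableExpSet_of_forall
    (hX : ∀ t, Integrable (fun ω => exp (t * X ω)) μ) (t : ℝ) :
    t ∈ interior (integrableExpSet X μ) := by
  simp [integrableExpSet, hX]

theorem analyticAt_cgf_of_forall_integrable (hX : ∀ t, Integrable (fun ω => exp (t * X ω)) μ)
    (t : ℝ) : AnalyticAt ℝ (cgf X μ) t :=
  analyticAt_cgf (mem_interior_integrableExpSet_of_forall hX t)

theorem deriv_cgf_zero_of_integral_eq_zero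
    (hX : ∀ t, Integrable (fun ω => exp (t * X ω)) μ) (hmean : ∫ ω, X ω ∂μ = 0) :
    deriv (cgf X μ) 0 = 0 := by
  simp [deriv_cgf_zero (mem_interior_integrableExpSet_of_forall hX 0), hmean]

theorem iteratedDeriv_two_cgf_zero_of_integral_eq_zero [IsProbabilityMeasure μ]
    (hX : ∀ t, Integrable (fun ω => exp (t * X ω)) μ) (hmean : ∫ ω, X ω ∂μ = 0) :
    iteratedDeriv 2 (cgf X μ) 0 = ∫ ω, X ω ^ 2 ∂μ := by
  simp [iteratedDeriv_two_cgf (mem_interior_integrableExpSet_of_forall hX 0),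
    deriv_cgf_zero_of_integral_eq_zero hX hmean]

theorem deriv_cgf_sub_isLittleO [IsProbabilityMeasure μ]
    (hX : ∀ t, Integrable (fun ω => exp (t * X ω)) μ) (hmean : ∫ ω, X ω ∂μ = 0) {v : ℝ}
    (hvar : ∫ ω, X ω ^ 2 ∂μ = v) :
    (fun t => deriv (cgf X μ) t - v * t) =o[𝓝 0] fun t => t := by
  have h_deriv : HasDerivAt (deriv (cgf X μ)) v 0 := by
    have h2 := iteratedDeriv_two_cgf_zero_of_integral_eq_zero hX hmean
    rw [iteratedDeriv_succ, iteratedDeriv_one, hvar] at h2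
    exact h2 ▸ (analyticAt_cgf_of_forall_integrable hX 0).deriv.differentiableAt.hasDerivAt
  have := hasDerivAt_iff_isLittleO_nhds_zero.1 h_deriv
  simpa [deriv_cgf_zero_of_integral_eq_zero hX hmean, mul_comm] using this

theorem continuous_deriv_cgf (hX : ∀ t, Integrable (fun ω => exp (t * X ω)) μ) :
    Continuous (deriv (cgf X μ)) :=
  continuous_iff_continuousAt.2 fun t =>
    (analyticAt_cgf_of_forall_integrable hX t).deriv.continuousAt

theorem cgf_sub_isLittleO_sq [IsProbabilityMeasure μ]
    (hX : ∀ t, Integrable (fun ω => exp (t * X ω)) μ) (hmean : ∫ ω, X ω ∂μ = 0) {v : ℝ}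
    (hvar : ∫ ω, X ω ^ 2 ∂μ = v) :
    (fun t => cgf X μ t - v / 2 * t ^ 2) =o[𝓝 0] fun t => t ^ 2 := by
  have h_deriv : ∀ t ∈ univ, HasDerivWithinAt (fun t => cgf X μ t - v / 2 * t ^ 2)
      (deriv (cgf X μ) t - v * t) univ t := fun t _ => by
    refine (((analyticAt_cgf_of_forall_integrable hX t).differentiableAt.hasDerivAt.sub
      ((hasDerivAt_pow 2 t).const_mul (v / 2))).congr_deriv ?_).hasDerivWithinAt
    simp only [Nat.cast_ofNat, Nat.add_one_sub_one, pow_one]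
    ring
  have h := convex_univ.isLittleO_pow_succ_real (n := 1) (mem_univ 0) h_deriv
    (by simpa only [nhdsWithin_univ, sub_zero, pow_one] using
      deriv_cgf_sub_isLittleO hX hmean hvar)
  simpa [nhdsWithin_univ] using h

end Cgf

section KL

variable {α : Type*} [MeasurableSpace α] {μ ν : Measure α}

theorem integral_llr_nonneg [IsProbabilityMeasure μ] [IsProbabilityMeasure ν] (hμν : μ ≪ ν)
    (h_int : Integrable (llr μ ν) μ) : 0 ≤ ∫ x, llr μ ν x ∂μ := by
  simpa using integral_llr_add_sub_measure_univ_nonneg hμν h_int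

theorem expNegKL_of_ac_of_integrable [IsProbabilityMeasure μ] [IsProbabilityMeasure ν]
    (hμν : μ ≪ ν) (h_int : Integrable (llr μ ν) μ) :
    expNegKL μ ν = exp (-∫ x, llr μ ν x ∂μ) := by
  have h_KL : KLdiv μ ν = ENNReal.ofReal (∫ x, llr μ ν x ∂μ) := if_pos ⟨hμν, h_int⟩
  rw [expNegKL, h_KL, if_neg ENNReal.ofReal_ne_top,
    ENNReal.toReal_ofReal (integral_llr_nonneg hμν h_int)]

theorem expNegKL_of_not (h : ¬(μ ≪ ν ∧ Integrable (llr μ ν) μ)) : expNegKL μ ν = 0 := by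
  rw [expNegKL, KLdiv, if_neg h, if_pos rfl]

theorem integral_sub_log_integral_exp_le_integral_llr [IsProbabilityMeasure μ]
    [IsProbabilityMeasure ν] (hμν : μ ≪ ν) (h_int : Integrable (llr μ ν) μ) {f : α → ℝ}
    (hfμ : Integrable f μ) (hfν : Integrable (fun x => exp (f x)) ν) :
    ∫ x, f x ∂μ - log (∫ x, exp (f x) ∂ν) ≤ ∫ x, llr μ ν x ∂μ := by
  have : IsProbabilityMeasure (ν.tilted f) := isProbabilityMeasure_tilted hfν
  have h := integral_llr_nonneg (hμν.trans (absolutelyContinuous_tilted hfν))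
    (integrable_llr_tilted_right hμν hfμ h_int hfν)
  rw [integral_llr_tilted_right hμν hfμ hfν h_int] at h
  linarith

theorem expNegKL_le_exp_log_integral_exp_sub [IsProbabilityMeasure μ] [IsProbabilityMeasure ν]
    {f : α → ℝ} (hfμ : Integrable f μ) (hfν : Integrable (fun x => exp (f x)) ν) :
    expNegKL μ ν ≤ exp (log (∫ x, exp (f x) ∂ν) - ∫ x, f x ∂μ) := by
  by_cases h : μ ≪ ν ∧ Integrable (llr μ ν) μ
  · rw [expNegKL_of_ac_of_integrable h.1 h.2, exp_le_exp]
    linarith [integral_sub_log_integral_exp_le_integral_llr h.1 h.2 hfμ hfν]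
  · rw [expNegKL_of_not h]
    positivity

theorem llr_tilted_self_ae_eq [IsProbabilityMeasure ν] {f : α → ℝ}
    (hfν : Integrable (fun x => exp (f x)) ν) (hf : AEMeasurable f ν) :
    llr (ν.tilted f) ν =ᵐ[ν.tilted f] fun x => f x - log (∫ x, exp (f x) ∂ν) := by
  refine (tilted_absolutelyContinuous ν f).ae_le ?_
  filter_upwards [llr_tilted_left (Measure.AbsolutelyContinuous.refl ν) hfν hf, llr_self ν]
    with x hx hx_self
  rw [hx, hx_self, Pi.zero_apply, add_zero]

theorem expNegKL_tilted [IsProbabilityMeasure ν] {f : α → ℝ}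
    (hfν : Integrable (fun x => exp (f x)) ν) (hf : AEMeasurable f ν)
    (hf_tilted : Integrable f (ν.tilted f)) :
    expNegKL (ν.tilted f) ν = exp (log (∫ x, exp (f x) ∂ν) - ∫ x, f x ∂(ν.tilted f)) := by
  have : IsProbabilityMeasure (ν.tilted f) := isProbabilityMeasure_tilted hfν
  have h_ae := llr_tilted_self_ae_eq hfν hf
  rw [expNegKL_of_ac_of_integrable (tilted_absolutelyContinuous ν f)
    ((hf_tilted.sub (integrable_const _)).congr h_ae.symm), integral_congr_ae h_ae,
    integral_sub hf_tilted (integrable_const _)]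
  simp

end KL

section SValue

/-- `s(θ_m, P₀)` for `θ_m(P) = E_P[Z] + m`. -/
noncomputable def meanShiftSValue (P₀ : Measure ℝ) (m : ℝ) : ℝ :=
  ⨆ P : {P : Measure ℝ //
      IsProbabilityMeasure P ∧ Integrable (fun z => z) P ∧ (∫ z, z ∂P) + m = 0},
    expNegKL P.1 P₀

variable {P₀ : Measure ℝ} [IsProbabilityMeasure P₀] {l m : ℝ}

theorem expNegKL_le_of_integral_add_eq_zero (hl : Integrable (fun z => exp (l * z)) P₀)
    {P : Measure ℝ} [IsProbabilityMeasure P] (hP : Integrable (fun z => z) P)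
    (hPm : (∫ z, z ∂P) + m = 0) : expNegKL P P₀ ≤ exp (cgf id P₀ l + l * m) := by
  refine (expNegKL_le_exp_log_integral_exp_sub (hP.const_mul l) hl).trans_eq ?_
  rw [integral_const_mul, eq_neg_of_add_eq_zero_left hPm]
  simp [cgf, mgf]

theorem meanShiftSValue_le (hl : Integrable (fun z => exp (l * z)) P₀) (m : ℝ) :
    meanShiftSValue P₀ m ≤ exp (cgf id P₀ l + l * m) :=
  Real.iSup_le (fun ⟨_, _, hP, hPm⟩ => expNegKL_le_of_integral_add_eq_zero hl hP hPm)
    (exp_pos _).le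

theorem exp_le_meanShiftSValue (hl : l ∈ interior (integrableExpSet id P₀))
    (hlm : deriv (cgf id P₀) l + m = 0) :
    exp (cgf id P₀ l + l * m) ≤ meanShiftSValue P₀ m := by
  have hl_int : Integrable (fun z => exp (l * z)) P₀ :=
    interior_subset (s := integrableExpSet id P₀) hl
  have : IsProbabilityMeasure (P₀.tilted (l * id ·)) := isProbabilityMeasure_tilted hl_int
  have h_int : Integrable id (P₀.tilted (l * id ·)) := (memLp_tilted_mul hl 1).integrable le_rfl
  have h_mean : ∫ z, id z ∂(P₀.tilted (l * id ·)) = deriv (cgf id P₀) l :=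
    integral_tilted_mul_self hl
  refine le_of_eq_of_le ?_ (le_ciSup ⟨_, forall_mem_range.2 fun ⟨_, _, hP, hPm⟩ =>
    expNegKL_le_of_integral_add_eq_zero hl_int hP hPm⟩ ⟨_, this, h_int, h_mean ▸ hlm⟩)
  change _ = expNegKL (P₀.tilted (l * id ·)) P₀
  rw [expNegKL_tilted (f := (l * id ·)) hl_int (by fun_prop) (h_int.const_mul l),
    integral_const_mul, h_mean, eq_neg_of_add_eq_zero_left hlm]
  simp [cgf, mgf]

end SValue

theorem svalue_small_shift_general (P₀ : Measure ℝ) [IsProbabilityMeasure P₀]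
    (hmgf : ∀ l : ℝ, Integrable (fun z => Real.exp (l * z)) P₀)
    (hmean : ∫ z, z ∂P₀ = 0)
    (σ : ℝ) (hσ : 0 < σ) (hvar : ∫ z, z ^ 2 ∂P₀ = σ ^ 2) :
    (fun m : ℝ =>
        (⨆ P : {P : Measure ℝ //
            IsProbabilityMeasure P ∧ Integrable (fun z => z) P ∧ (∫ z, z ∂P) + m = 0},
          expNegKL P.1 P₀) - Real.exp (-(m ^ 2) / (2 * σ ^ 2)))
      =o[nhds (0 : ℝ)] (fun m : ℝ => m ^ 2) := by
  have hσ2 : 0 < σ ^ 2 := by positivity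
  obtain ⟨l, hl_O, hl⟩ := exists_isBigO_eventually_apply_add_eq_zero hσ2.ne'
    (continuous_deriv_cgf (X := id) hmgf)
    (deriv_cgf_zero_of_integral_eq_zero (X := id) hmgf hmean)
    (deriv_cgf_sub_isLittleO (X := id) hmgf hmean hvar)
  refine sub_exp_neg_sq_div_isLittleO_sq (s := meanShiftSValue P₀) hσ2
    (cgf_sub_isLittleO_sq (X := id) hmgf hmean hvar)
    (fun t m => meanShiftSValue_le (hmgf t) m) hl_O ?_
  filter_upwards [hl] with m hm
  exact exp_le_meanShiftSValue (mem_interior_integrableExpSet_of_forall hmgf _) hm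

/-- small shifts: for `Z ~ P₀` with finite MGF, mean `0` and variance `σ² > 0`,
the s-value of the parameter `θ_μ(P) = E_P[Z] + μ` satisfies
`s(θ_μ, P₀) = exp(−μ²/(2σ²)) + o(μ²)` as `μ → 0`. -/
theorem svalue_small_shift (P₀ : Measure ℝ) [IsProbabilityMeasure P₀]
    (hmgf : ∀ l : ℝ, Integrable (fun z => Real.exp (l * z)) P₀)
    (hint : Integrable (fun z => z) P₀) (hmean : ∫ z, z ∂P₀ = 0)
    (σ : ℝ) (hσ : 0 < σ) (hvar : ∫ z, z ^ 2 ∂P₀ = σ ^ 2) :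
    (fun m : ℝ =>
        (⨆ P : {P : Measure ℝ //
            IsProbabilityMeasure P ∧ Integrable (fun z => z) P ∧ (∫ z, z ∂P) + m = 0},
          expNegKL P.1 P₀) - Real.exp (-(m ^ 2) / (2 * σ ^ 2)))
      =o[nhds (0 : ℝ)] (fun m : ℝ => m ^ 2) :=
  svalue_small_shift_general P₀ hmgf hmean σ hσ hvar
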